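/- arXiv:1901.06586 — 2 statements merged into one kernel-verified Lean document; each statement's English description precedes it below -/
import Mathlib

section
/- Let K be a field, n ≥ 3, and let Γ ⊂ K^{2n−1} be the affine cone over the rational normal curve of degree 2n−2, i.e., the set of vectors γ(u,v) = (u^{2n−2}, u^{2n−3}v, …, v^{2n−2}). Let S be a set of 2n−3 distinct points on P¹ and S′ a set of 2n−4 distinct points on P¹ such that at least two points of S′ do not belong to S. Let W = span{γ(s) : s ∈ S} and W′ = span{γ(s) : s ∈ S′}. Then W + W′ = K^{2n−1}. -/
open Polynomial Matrix

/-- Homogeneous Vandermonde: `N` pairwise projectively-distinct nonzero pairs give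
Veronese vectors of degree `N-1` spanning `K^N`. -/
theorem key_span {K : Type*} [Field K] (N : ℕ) {ι : Type*} [Fintype ι]
    (hcard : Fintype.card ι = N) (v : ι → K × K) (h0 : ∀ i, v i ≠ 0)
    (hd : ∀ i j, i ≠ j → (v i).1 * (v j).2 - (v i).2 * (v j).1 ≠ 0) :
    Submodule.span K (Set.range (fun i => fun j : Fin N =>
      (v i).1 ^ (N - 1 - (j : ℕ)) * (v i).2 ^ (j : ℕ))) = ⊤ := by
  classical
  obtain ⟨e⟩ : Nonempty (Fin N ≃ ι) := ⟨(Fintype.equivFinOfCardEq hcard).symm⟩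
  set u : Fin N → K × K := v ∘ e with hu
  have h0' : ∀ i, u i ≠ 0 := fun i => h0 (e i)
  have hd' : ∀ i j, i ≠ j → (u i).1 * (u j).2 - (u i).2 * (u j).1 ≠ 0 :=
    fun i j hij => hd (e i) (e j) (fun h => hij (e.injective h))
  set M : Matrix (Fin N) (Fin N) K :=
    fun i j => (u i).1 ^ (N - 1 - (j : ℕ)) * (u i).2 ^ (j : ℕ) with hM
  have hrange : Set.range (fun i => fun j : Fin N =>
      (v i).1 ^ (N - 1 - (j : ℕ)) * (v i).2 ^ (j : ℕ)) = Set.range M :=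
    (e.surjective.range_comp _).symm
  have hdet : M.det ≠ 0 := by
    intro hdet
    obtain ⟨c, hc0, hMc⟩ := (Matrix.exists_mulVec_eq_zero_iff).mpr hdet
    set p : K[X] := ∑ j : Fin N, C (c j) * X ^ (j : ℕ) with hp
    have hcoeff : ∀ j : Fin N, p.coeff (j : ℕ) = c j := by
      intro j
      rw [hp, finset_sum_coeff, Finset.sum_eq_single j]
      · simp
      · intro k _ hkj
        rw [coeff_C_mul, coeff_X_pow, if_neg (fun h => hkj (Fin.ext h.symm)), mul_zero]
      · simp
    have hpne : p ≠ 0 := fun h => hc0 (funext fun j => by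
      show c j = 0
      rw [← hcoeff j, h, coeff_zero])
    have hhigh : ∀ k, N ≤ k → p.coeff k = 0 := by
      intro k hk
      rw [hp, finset_sum_coeff]
      apply Finset.sum_eq_zero
      intro j _
      rw [coeff_C_mul, coeff_X_pow, if_neg (by have := j.isLt; omega), mul_zero]
    have heval : ∀ i : Fin N, (u i).1 ≠ 0 → p.eval ((u i).2 / (u i).1) = 0 := by
      intro i hai
      have h1 : (u i).1 ^ (N - 1) * p.eval ((u i).2 / (u i).1) = ∑ j, M i j * c j := by
        rw [hp, eval_finset_sum, Finset.mul_sum]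
        apply Finset.sum_congr rfl
        intro j _
        rw [eval_mul, eval_C, eval_pow, eval_X, hM,
          show N - 1 = (N - 1 - (j : ℕ)) + (j : ℕ) from by have := j.isLt; omega, pow_add]
        simp only [Nat.add_sub_cancel, div_pow]
        field_simp
      have h2 : ∑ j, M i j * c j = 0 := by
        have := congr_fun hMc i
        simpa [Matrix.mulVec, dotProduct] using this
      exact (mul_eq_zero.mp (h1.trans h2)).resolve_left (pow_ne_zero _ hai)
    have hinj : ∀ i k : Fin N, (u i).1 ≠ 0 → (u k).1 ≠ 0 →
        (u i).2 / (u i).1 = (u k).2 / (u k).1 → i = k := by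
      intro i k hai hak h
      by_contra hik
      apply hd' i k hik
      have h' := (div_eq_div_iff hai hak).mp h
      linear_combination -h'
    by_cases hall : ∀ i, (u i).1 ≠ 0
    · have hdeg : p.natDegree < Fintype.card (Fin N) := by
        rw [Fintype.card_fin]
        exact (natDegree_lt_iff_degree_lt hpne).mpr ((degree_lt_iff_coeff_zero p N).mpr hhigh)
      exact hpne (p.eq_zero_of_natDegree_lt_card_of_eval_eq_zero
        (f := fun i : Fin N => (u i).2 / (u i).1)
        (fun i k h => hinj i k (hall i) (hall k) h)
        (fun i => heval i (hall i)) hdeg)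
    · push_neg at hall
      obtain ⟨i0, hi0⟩ := hall
      have hb0 : (u i0).2 ≠ 0 := by
        intro h
        exact h0' i0 (Prod.ext hi0 h)
      have hane : ∀ i, i ≠ i0 → (u i).1 ≠ 0 := by
        intro i hi hA
        apply hd' i i0 hi
        rw [hA, hi0]; ring
      have hN1 : N - 1 < N := by have := i0.isLt; omega
      have hrow := congr_fun hMc i0
      have hctop : c ⟨N - 1, hN1⟩ = 0 := by
        have hsum : ∑ j, M i0 j * c j = 0 := by
          simpa [Matrix.mulVec, dotProduct] using hrow
        rw [Finset.sum_eq_single (⟨N - 1, hN1⟩ : Fin N)] at hsum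
        · rw [hM] at hsum
          simp only [hi0, Nat.sub_self, pow_zero, one_mul] at hsum
          exact (mul_eq_zero.mp hsum).resolve_left (pow_ne_zero _ hb0)
        · intro j _ hj
          rw [hM]
          simp only [hi0]
          rw [zero_pow (by
            have := j.isLt
            intro hz
            apply hj
            apply Fin.ext
            simp only []
            omega), zero_mul, zero_mul]
        · simp
      have hhigh' : ∀ k, N - 1 ≤ k → p.coeff k = 0 := by
        intro k hk
        rcases Nat.lt_or_ge k N with h | h
        · have hkk : k = N - 1 := by omega
          subst hkk
          have := hcoeff ⟨N - 1, hN1⟩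
          simpa [hctop] using this
        · exact hhigh k h
      have hdeg : p.natDegree < Fintype.card {i : Fin N // i ≠ i0} := by
        have hcard' : Fintype.card {i : Fin N // i ≠ i0} = N - 1 := by
          simp [Fintype.card_subtype_compl, Fintype.card_subtype_eq]
        rw [hcard']
        exact (natDegree_lt_iff_degree_lt hpne).mpr
          ((degree_lt_iff_coeff_zero p (N - 1)).mpr hhigh')
      exact hpne (p.eq_zero_of_natDegree_lt_card_of_eval_eq_zero
        (f := fun i : {i : Fin N // i ≠ i0} => (u i.1).2 / (u i.1).1)
        (fun i k h => Subtype.ext (hinj i.1 k.1 (hane i.1 i.2) (hane k.1 k.2) h))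
        (fun i => heval i.1 (hane i.1 i.2)) hdeg)
  have hu : IsUnit M := (Matrix.isUnit_iff_isUnit_det M).mpr (isUnit_iff_ne_zero.mpr hdet)
  rw [hrange, show Set.range M = Set.range M.row from rfl, ← range_vecMulLinear, LinearMap.range_eq_top]
  exact Matrix.vecMul_surjective_iff_isUnit.mpr hu

/-- Transversality of secant spans of the rational normal curve of degree `2n-2`:
if `S` consists of `2n-3` distinct points of `P¹` and `S'` of `2n-4` distinct points,
at least two of which are not in `S`, then the spans of the corresponding points
`γ(u,v) = (u^{2n-2}, u^{2n-3}v, …, v^{2n-2})` of the affine cone over the curve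
together span all of `K^{2n-1}`. Points of `P¹` are encoded as nonzero pairs, with
distinctness expressed by nonvanishing of cross products. -/
theorem stmt7 {K : Type*} [Field K] (n : ℕ) (hn : 3 ≤ n)
    (s : Fin (2*n - 3) → K × K) (s' : Fin (2*n - 4) → K × K)
    (hs0 : ∀ i, s i ≠ 0) (hs'0 : ∀ i, s' i ≠ 0)
    (hs : ∀ i j, i ≠ j → (s i).1 * (s j).2 - (s i).2 * (s j).1 ≠ 0)
    (hs' : ∀ i j, i ≠ j → (s' i).1 * (s' j).2 - (s' i).2 * (s' j).1 ≠ 0)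
    (htwo : ∃ i₁ i₂ : Fin (2*n - 4), i₁ ≠ i₂ ∧
      (∀ j, (s' i₁).1 * (s j).2 - (s' i₁).2 * (s j).1 ≠ 0) ∧
      (∀ j, (s' i₂).1 * (s j).2 - (s' i₂).2 * (s j).1 ≠ 0)) :
    Submodule.span K (Set.range (fun i => fun j : Fin (2*n - 1) =>
        (s i).1 ^ (2*n - 2 - (j : ℕ)) * (s i).2 ^ (j : ℕ))) ⊔
      Submodule.span K (Set.range (fun i => fun j : Fin (2*n - 1) =>
        (s' i).1 ^ (2*n - 2 - (j : ℕ)) * (s' i).2 ^ (j : ℕ)))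
      = (⊤ : Submodule K (Fin (2*n - 1) → K)) := by
  obtain ⟨i₁, i₂, h12, h1, h2⟩ := htwo
  set w : Fin (2*n - 3) ⊕ Bool → K × K :=
    Sum.elim s (fun b => bif b then s' i₁ else s' i₂) with hw
  have hw0 : ∀ i, w i ≠ 0 := by
    rintro (i | b)
    · exact hs0 i
    · cases b
      · exact hs'0 i₂
      · exact hs'0 i₁
  have hwd : ∀ i j, i ≠ j → (w i).1 * (w j).2 - (w i).2 * (w j).1 ≠ 0 := by
    rintro (i | b) (j | b') hij
    · exact hs i j (fun h => hij (by rw [h]))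
    · cases b'
      · intro h
        simp only [hw, Sum.elim_inl, Sum.elim_inr, Bool.cond_false] at h
        exact h2 i (by linear_combination -h)
      · intro h
        simp only [hw, Sum.elim_inl, Sum.elim_inr, Bool.cond_true] at h
        exact h1 i (by linear_combination -h)
    · cases b
      · exact h2 j
      · exact h1 j
    · cases b <;> cases b'
      · exact absurd rfl hij
      · exact hs' i₂ i₁ (Ne.symm h12)
      · exact hs' i₁ i₂ h12
      · exact absurd rfl hij
  have hcard : Fintype.card (Fin (2*n - 3) ⊕ Bool) = 2*n - 1 := by
    simp only [Fintype.card_sum, Fintype.card_fin, Fintype.card_bool]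
    omega
  have hkey := key_span (2*n - 1) hcard w hw0 hwd
  have hE : ∀ j : Fin (2*n - 1), 2*n - 2 - (j : ℕ) = 2*n - 1 - 1 - (j : ℕ) :=
    fun j => by omega
  simp only [hE]
  rw [eq_top_iff, ← hkey, Submodule.span_le]
  rintro x ⟨i, rfl⟩
  match i with
  | Sum.inl i => exact Submodule.mem_sup_left (Submodule.subset_span ⟨i, rfl⟩)
  | Sum.inr true => exact Submodule.mem_sup_right (Submodule.subset_span ⟨i₁, rfl⟩)
  | Sum.inr false => exact Submodule.mem_sup_right (Submodule.subset_span ⟨i₂, rfl⟩)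
end

section
/- Let K be a field, n ≥ 3, and B : P¹ → P^{n−1} the rational normal curve of degree n−1, B([u:v]) = [u^{n−1} : u^{n−2}v : ⋯ : v^{n−1}]. Let C : P¹ → P^{n−1} be the composition of the squaring map [u:v] ↦ [u²:v²] with B, so C has degree 2n−2 with components u^{2n−2}, u^{2n−4}v², …, v^{2n−2}. Then for any effective divisor D of degree n−2 on P¹, the projective span M_D of B(D) is an (n−3)-dimensional subspace satisfying M_D · C = 2·σ(D), where σ is the pushforward of divisors under the squaring map; in particular M_D is an (n−3)-dimensional (2n−4)-secant of C. -/
open MvPolynomial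

/-- Pullback along the rational normal curve `B` of degree `n-1` of the linear form
with coefficients `a`: the binary form `∑ aⱼ u^{n-1-j} v^j`. -/
noncomputable def Bform {K : Type*} [Field K] (n : ℕ) (a : Fin n → K) :
    MvPolynomial (Fin 2) K :=
  ∑ j : Fin n, MvPolynomial.C (a j) *
    MvPolynomial.X 0 ^ (n - 1 - (j : ℕ)) * MvPolynomial.X 1 ^ (j : ℕ)

/-- Pullback along the curve `C` with components `u^{2n-2}, u^{2n-4}v², …, v^{2n-2}`
(the composition of the squaring map with `B`) of the linear form with coefficients
`a`: the binary form `∑ aⱼ u^{2n-2-2j} v^{2j}`. -/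
noncomputable def Cform {K : Type*} [Field K] (n : ℕ) (a : Fin n → K) :
    MvPolynomial (Fin 2) K :=
  ∑ j : Fin n, MvPolynomial.C (a j) *
    MvPolynomial.X 0 ^ (2*n - 2 - 2*(j : ℕ)) * MvPolynomial.X 1 ^ (2*(j : ℕ))


lemma smul2_inj {σ : Type*} : Function.Injective (fun d : σ →₀ ℕ => 2 • d) := by
  intro a b h
  ext i
  have := DFunLike.congr_fun h i
  simp only [Finsupp.smul_apply, smul_eq_mul] at this
  omega

noncomputable def mcontract {K : Type*} [Field K] (p : MvPolynomial (Fin 2) K) :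
    MvPolynomial (Fin 2) K :=
  AddMonoidAlgebra.ofCoeff (Finsupp.comapDomain (fun d => 2 • d) (AddMonoidAlgebra.coeff p) smul2_inj.injOn)

lemma coeff_mcontract {K : Type*} [Field K] (p : MvPolynomial (Fin 2) K) (d : Fin 2 →₀ ℕ) :
    coeff d (mcontract p) = coeff (2 • d) p := rfl

lemma expand_monomial' {K : Type*} [Field K] (d : Fin 2 →₀ ℕ) (r : K) :
    expand 2 (monomial d r) = monomial (2 • d) r := by
  rw [expand_monomial, monomial_eq]

lemma expand_as_sum {K : Type*} [Field K] (g : MvPolynomial (Fin 2) K) :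
    expand 2 g = ∑ e ∈ g.support, monomial (2 • e) (coeff e g) := by
  conv_lhs => rw [g.as_sum]
  rw [map_sum]
  exact Finset.sum_congr rfl fun e _ => expand_monomial' e _

lemma coeff_expand_smul {K : Type*} [Field K] (g : MvPolynomial (Fin 2) K) (e : Fin 2 →₀ ℕ) :
    coeff (2 • e) (expand 2 g) = coeff e g := by
  rw [expand_as_sum, coeff_sum]
  simp only [coeff_monomial]
  rw [Finset.sum_eq_single e]
  · simp
  · intro b _ hb
    rw [if_neg fun h => hb (smul2_inj h)]
  · intro h
    simp [MvPolynomial.notMem_support_iff.mp h]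

lemma coeff_expand_odd {K : Type*} [Field K] (g : MvPolynomial (Fin 2) K) (e : Fin 2 →₀ ℕ)
    (he : ∀ e', e ≠ 2 • e') : coeff e (expand 2 g) = 0 := by
  rw [expand_as_sum, coeff_sum]
  refine Finset.sum_eq_zero fun b _ => ?_
  rw [coeff_monomial, if_neg fun h => he b h.symm]
lemma mcontract_expand_mul {K : Type*} [Field K] (g h : MvPolynomial (Fin 2) K) :
    mcontract (expand 2 g * h) = g * mcontract h := by
  ext d
  rw [coeff_mcontract, coeff_mul, coeff_mul]
  rw [show (Finset.HasAntidiagonal.antidiagonal d) = Finset.HasAntidiagonal.antidiagonal d from rfl]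
  have hsub : (Finset.HasAntidiagonal.antidiagonal d).map
      ⟨fun x => (2 • x.1, 2 • x.2), show Function.Injective _ from by
        intro x y hxy
        simp only [Prod.mk.injEq] at hxy
        exact Prod.ext (smul2_inj hxy.1) (smul2_inj hxy.2)⟩ ⊆ Finset.HasAntidiagonal.antidiagonal (2 • d) := by
    intro x hx
    simp only [Finset.mem_map, Function.Embedding.coeFn_mk, Finset.HasAntidiagonal.mem_antidiagonal] at hx ⊢
    obtain ⟨⟨e, f⟩, hef, rfl⟩ := hx
    rw [← smul_add, hef]
  rw [← Finset.sum_subset hsub, Finset.sum_map]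
  · refine Finset.sum_congr rfl fun x _ => ?_
    simp only [Function.Embedding.coeFn_mk]
    rw [_root_.coeff_expand_smul, coeff_mcontract]
  · intro x hx hnx
    rcases em (∃ e', x.1 = 2 • e') with ⟨e', he'⟩ | hodd
    · exfalso
      apply hnx
      rw [Finset.HasAntidiagonal.mem_antidiagonal] at hx
      have hle : ∀ i, e' i ≤ d i := by
        intro i
        have := DFunLike.congr_fun hx i
        rw [he'] at this
        simp only [Finsupp.add_apply, Finsupp.smul_apply, smul_eq_mul] at this
        omega
      have hx2 : x.2 = 2 • (d - e') := by
        ext i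
        have := DFunLike.congr_fun hx i
        rw [he'] at this
        simp only [Finsupp.add_apply, Finsupp.smul_apply, smul_eq_mul] at this ⊢
        simp only [Finsupp.tsub_apply]
        omega
      simp only [Finset.mem_map, Function.Embedding.coeFn_mk, Finset.HasAntidiagonal.mem_antidiagonal]
      refine ⟨(e', d - e'), ?_, ?_⟩
      · ext i
        have := hle i
        simp only [Finsupp.add_apply, Finsupp.tsub_apply]
        omega
      · rw [← he', ← hx2]
    · rw [coeff_expand_odd g x.1 (by push_neg at hodd; exact fun e' h => hodd e' h), zero_mul]

lemma mcontract_expand {K : Type*} [Field K] (p : MvPolynomial (Fin 2) K) :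
    mcontract (expand 2 p) = p := by
  ext d
  rw [coeff_mcontract, _root_.coeff_expand_smul]

lemma expand_dvd_iff {K : Type*} [Field K] (g p : MvPolynomial (Fin 2) K) :
    expand 2 g ∣ expand 2 p ↔ g ∣ p := by
  constructor
  · rintro ⟨h, hh⟩
    exact ⟨mcontract h, by rw [← mcontract_expand p, hh, mcontract_expand_mul]⟩
  · rintro ⟨h, rfl⟩
    exact ⟨expand 2 h, by rw [map_mul]⟩


lemma deg2 (d : Fin 2 →₀ ℕ) : d.degree = d 0 + d 1 := by
  rw [Finsupp.degree_apply]
  rw [Finset.sum_subset (Finset.subset_univ d.support)]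
  · exact Fin.sum_univ_two d
  · intro i _ hi
    simpa using Finsupp.notMem_support_iff.mp hi

lemma term_eq {K : Type*} [Field K] (a : K) (p q : ℕ) :
    (C a * X 0 ^ p * X 1 ^ q : MvPolynomial (Fin 2) K) =
      monomial (Finsupp.single 0 p + Finsupp.single 1 q) a := by
  rw [X_pow_eq_monomial, X_pow_eq_monomial, C_apply, monomial_mul, monomial_mul]
  simp

noncomputable def dvec (n : ℕ) (j : Fin n) : Fin 2 →₀ ℕ :=
  Finsupp.single 0 (n - 1 - (j : ℕ)) + Finsupp.single 1 (j : ℕ)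

lemma dvec_apply0 (n : ℕ) (j : Fin n) : dvec n j 0 = n - 1 - (j : ℕ) := by
  simp [dvec]

lemma dvec_apply1 (n : ℕ) (j : Fin n) : dvec n j 1 = (j : ℕ) := by
  simp [dvec, Finsupp.single_apply]

lemma dvec_inj (n : ℕ) : Function.Injective (dvec n) := by
  intro j j' h
  have := congrArg (fun d => d 1) h
  simp only [dvec_apply1] at this
  exact Fin.ext this

lemma dvec_degree (n : ℕ) (j : Fin n) : (dvec n j).degree = n - 1 := by
  rw [deg2, dvec_apply0, dvec_apply1]
  have := j.2
  omega

lemma Bform_eq {K : Type*} [Field K] (n : ℕ) (a : Fin n → K) :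
    Bform n a = ∑ j : Fin n, monomial (dvec n j) (a j) := by
  unfold Bform
  exact Finset.sum_congr rfl fun j _ => term_eq _ _ _

lemma coeff_Bform {K : Type*} [Field K] (n : ℕ) (a : Fin n → K) (j : Fin n) :
    coeff (dvec n j) (Bform n a) = a j := by
  rw [Bform_eq, coeff_sum]
  rw [Finset.sum_eq_single j]
  · simp [coeff_monomial]
  · intro b _ hb
    rw [coeff_monomial, if_neg fun h => hb (dvec_inj n h)]
  · simp

lemma Bform_injective {K : Type*} [Field K] (n : ℕ) :
    Function.Injective (Bform n (K := K)) := by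
  intro a b h
  funext j
  rw [← coeff_Bform n a j, ← coeff_Bform n b j, h]

lemma Bform_isHomogeneous {K : Type*} [Field K] (n : ℕ) (a : Fin n → K) :
    (Bform n a).IsHomogeneous (n - 1) := by
  rw [Bform_eq]
  exact MvPolynomial.IsHomogeneous.sum _ _ _
    fun j _ => isHomogeneous_monomial _ (dvec_degree n j)

lemma Bform_of_homog {K : Type*} [Field K] (n : ℕ) (hn : 3 ≤ n)
    (p : MvPolynomial (Fin 2) K) (hp : p.IsHomogeneous (n - 1)) :
    Bform n (fun j => coeff (dvec n j) p) = p := by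
  ext e
  rw [Bform_eq, coeff_sum]
  rcases em (∃ j : Fin n, dvec n j = e) with ⟨j, rfl⟩ | he
  · rw [Finset.sum_eq_single j]
    · simp [coeff_monomial]
    · intro b _ hb
      rw [coeff_monomial, if_neg fun h => hb (dvec_inj n h)]
    · simp
  · rw [Finset.sum_eq_zero, eq_comm]
    · by_contra hne
      have hdeg : e.degree = n - 1 := by
        by_contra hd
        exact hne (hp.coeff_eq_zero hd)
      rw [deg2] at hdeg
      have h1 : e 1 < n := by omega
      refine he ⟨⟨e 1, h1⟩, ?_⟩
      have h0 : dvec n ⟨e 1, h1⟩ 0 = e 0 := by rw [dvec_apply0]; simp only; omega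
      have h1' : dvec n ⟨e 1, h1⟩ 1 = e 1 := dvec_apply1 n _
      ext i
      fin_cases i
      exacts [h0, h1']
    · intro b _
      rw [coeff_monomial, if_neg fun h => he ⟨b, h⟩]

lemma Bform_smul_add {K : Type*} [Field K] (n : ℕ) (s t : K) (a b : Fin n → K) :
    Bform n (s • a + t • b) = s • Bform n a + t • Bform n b := by
  simp only [Bform_eq, Finset.smul_sum, ← Finset.sum_add_distrib, Pi.add_apply, Pi.smul_apply,
    smul_eq_mul]
  refine Finset.sum_congr rfl fun j _ => ?_
  rw [← smul_eq_mul, ← smul_eq_mul, map_add, (monomial _).map_smul, (monomial _).map_smul]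
lemma homogComp_mul {K : Type*} [Field K] {g : MvPolynomial (Fin 2) K} {m : ℕ}
    (hg : g.IsHomogeneous m) (h : MvPolynomial (Fin 2) K) (k : ℕ) :
    homogeneousComponent (m + k) (g * h) = g * homogeneousComponent k h := by
  conv_lhs => rw [← h.sum_homogeneousComponent]
  rw [Finset.mul_sum, map_sum]
  have hterm : ∀ i, homogeneousComponent (m + k) (g * homogeneousComponent i h) =
      if i = k then g * homogeneousComponent i h else 0 := by
    intro i
    have hmem : g * homogeneousComponent i h ∈ homogeneousSubmodule (Fin 2) K (m + i) := by
      rw [mem_homogeneousSubmodule]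
      exact hg.mul (homogeneousComponent_isHomogeneous i h)
    rw [homogeneousComponent_of_mem hmem]
    by_cases hik : i = k
    · subst hik; simp
    · rw [if_neg (by omega), if_neg hik]
  simp only [hterm]
  rw [Finset.sum_ite_eq' (Finset.range (h.totalDegree + 1)) k
    (fun i => g * homogeneousComponent i h)]
  by_cases hk : k ∈ Finset.range (h.totalDegree + 1)
  · rw [if_pos hk]
  · rw [if_neg hk, homogeneousComponent_eq_zero, mul_zero]
    simp only [Finset.mem_range] at hk
    omega

lemma homog_one_eq {K : Type*} [Field K] (h : MvPolynomial (Fin 2) K)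
    (hh : h.IsHomogeneous 1) :
    h = C (coeff (Finsupp.single 0 1) h) * X 0 + C (coeff (Finsupp.single 1 1) h) * X 1 := by
  have hX : ∀ (c : K) (i : Fin 2), C c * X i = monomial (Finsupp.single i 1) c := by
    intro c i
    rw [X, C_apply, monomial_mul]
    simp
  ext d
  rw [coeff_add, hX, hX, coeff_monomial, coeff_monomial]
  have hne : (Finsupp.single (0 : Fin 2) 1) ≠ Finsupp.single 1 1 := by
    intro hcon
    have := DFunLike.congr_fun hcon 0
    simp [Finsupp.single_apply] at this
  by_cases h0 : d = Finsupp.single 0 1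
  · subst h0
    rw [if_pos rfl, if_neg (fun hc => hne hc.symm ), add_zero]
  · by_cases h1 : d = Finsupp.single 1 1
    · subst h1
      rw [if_pos rfl, if_neg (fun hc => hne hc), zero_add]
    · rw [if_neg (fun hc => h0 hc.symm), if_neg (fun hc => h1 hc.symm), add_zero]
      refine hh.coeff_eq_zero ?_
      rw [deg2]
      intro hcon
      rcases Nat.eq_zero_or_pos (d 0) with hz | hp
      · apply h1
        ext i
        fin_cases i <;> simp [Finsupp.single_apply] <;> omega
      · apply h0
        ext i
        fin_cases i <;> simp [Finsupp.single_apply] <;> omega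


lemma Cform_eq {K : Type*} [Field K] (n : ℕ) (a : Fin n → K) :
    Cform n a = expand 2 (Bform n a) := by
  rw [Bform_eq, map_sum]
  unfold Cform
  refine Finset.sum_congr rfl fun j _ => ?_
  rw [term_eq, expand_monomial']
  congr 1
  have hj := j.2
  rw [dvec, smul_add, Finsupp.smul_single, Finsupp.smul_single, smul_eq_mul, smul_eq_mul]
  congr 1
  ext i
  fin_cases i <;> simp [Finsupp.single_apply] <;> omega

lemma aeval_sq_eq_expand {K : Type*} [Field K] (g : MvPolynomial (Fin 2) K) :
    MvPolynomial.aeval (fun i : Fin 2 => MvPolynomial.X i ^ 2) g = expand 2 g := by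
  rfl

lemma coeff_lin0 {K : Type*} [Field K] (s t : K) :
    coeff (Finsupp.single 0 1) (C s * X 0 + C t * X 1 : MvPolynomial (Fin 2) K) = s := by
  have hX : ∀ (c : K) (i : Fin 2), C c * X i = monomial (Finsupp.single i 1) c := by
    intro c i
    rw [X, C_apply, monomial_mul]
    simp
  rw [coeff_add, hX, hX, coeff_monomial, coeff_monomial, if_pos rfl, if_neg, add_zero]
  intro hcon
  have := DFunLike.congr_fun hcon 0
  simp [Finsupp.single_apply] at this

lemma coeff_lin1 {K : Type*} [Field K] (s t : K) :
    coeff (Finsupp.single 1 1) (C s * X 0 + C t * X 1 : MvPolynomial (Fin 2) K) = t := by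
  have hX : ∀ (c : K) (i : Fin 2), C c * X i = monomial (Finsupp.single i 1) c := by
    intro c i
    rw [X, C_apply, monomial_mul]
    simp
  rw [coeff_add, hX, hX, coeff_monomial, coeff_monomial, if_pos rfl, if_neg, zero_add]
  intro hcon
  have := DFunLike.congr_fun hcon 0
  simp [Finsupp.single_apply] at this

/-- For an effective divisor `D` of degree `n-2` on `P¹`, encoded by its (nonzero)
binary form `g` of degree `n-2`: the linear forms vanishing on the span `M_D` of
`B(D)` (i.e. those `a` with `g ∣ Bform a`) form a 2-dimensional space — so `M_D` is an
`(n-3)`-dimensional projective subspace — and the intersection divisor of `M_D` with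
`C` equals `2σ(D)`: a hyperplane through `M_D` pulls back along `C` to a form
divisible by `g(u², v²)`, and exactly those. In particular `M_D` is an
`(n-3)`-dimensional `(2n-4)`-secant of `C`. -/
theorem stmt16 {K : Type*} [Field K] [IsAlgClosed K] (n : ℕ) (hn : 3 ≤ n)
    (g : MvPolynomial (Fin 2) K) (hg0 : g ≠ 0) (hg : g.IsHomogeneous (n - 2)) :
    (∃ a₀ a₁ : Fin n → K, LinearIndependent K ![a₀, a₁] ∧
      {a : Fin n → K | g ∣ Bform n a} =
        ↑(Submodule.span K ({a₀, a₁} : Set (Fin n → K)))) ∧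
    (∀ a : Fin n → K, g ∣ Bform n a ↔
      (MvPolynomial.aeval (fun i : Fin 2 => MvPolynomial.X i ^ 2) g) ∣ Cform n a) := by
  have hgx : ∀ i : Fin 2, (g * X i).IsHomogeneous (n - 1) := by
    intro i
    rw [show n - 1 = (n - 2) + 1 by omega]
    exact hg.mul (isHomogeneous_X _ _)
  set a₀ : Fin n → K := fun j => coeff (dvec n j) (g * X 0) with ha₀
  set a₁ : Fin n → K := fun j => coeff (dvec n j) (g * X 1) with ha₁
  have hB0 : Bform n a₀ = g * X 0 := Bform_of_homog n hn _ (hgx 0)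
  have hB1 : Bform n a₁ = g * X 1 := Bform_of_homog n hn _ (hgx 1)
  constructor
  · refine ⟨a₀, a₁, ?_, ?_⟩
    · rw [LinearIndependent.pair_iff]
      intro s t hst
      have h0 : Bform n (s • a₀ + t • a₁) = 0 := by
        rw [hst]
        simp [Bform_eq]
      rw [Bform_smul_add, hB0, hB1, smul_eq_C_mul, smul_eq_C_mul,
        show C s * (g * X 0) + C t * (g * X 1) = g * (C s * X 0 + C t * X 1) by ring] at h0
      have hz : (C s * X 0 + C t * X 1 : MvPolynomial (Fin 2) K) = 0 :=
        (mul_eq_zero.mp h0).resolve_left hg0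
      constructor
      · rw [← coeff_lin0 s t, hz, coeff_zero]
      · rw [← coeff_lin1 s t, hz, coeff_zero]
    · ext a
      simp only [Set.mem_setOf_eq, SetLike.mem_coe, Submodule.mem_span_pair]
      constructor
      · rintro ⟨h, hh⟩
        set h₁ := homogeneousComponent 1 h with hh₁
        have hkey : g * h₁ = Bform n a := by
          have h2 := homogComp_mul hg h 1
          rw [← hh, show n - 2 + 1 = n - 1 by omega] at h2
          rw [← h2, homogeneousComponent_of_mem
            ((mem_homogeneousSubmodule _ _).mpr (Bform_isHomogeneous n a)), if_pos rfl]
        set s := coeff (Finsupp.single 0 1) h₁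
        set t := coeff (Finsupp.single 1 1) h₁
        have hdec : h₁ = C s * X 0 + C t * X 1 :=
          homog_one_eq h₁ (homogeneousComponent_isHomogeneous 1 h)
        refine ⟨s, t, Bform_injective n ?_⟩
        rw [Bform_smul_add, hB0, hB1, ← hkey, hdec, smul_eq_C_mul, smul_eq_C_mul]
        ring
      · rintro ⟨s, t, rfl⟩
        refine ⟨C s * X 0 + C t * X 1, ?_⟩
        rw [Bform_smul_add, hB0, hB1, smul_eq_C_mul, smul_eq_C_mul]
        ring
  · intro a
    rw [aeval_sq_eq_expand, Cform_eq, expand_dvd_iff]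
end
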